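/- arXiv:2605.15780 — 3 statements merged into one kernel-verified Lean document; each statement's English description precedes it below -/
import Mathlib

section
/- Let C be an F_q-linear rank-metric code in F_q^{n×m} of dimension k with generator tensor T (i.e., the first slice space of T equals C). Then the second slice space dimension of T equals the dimension of the sum over all M ∈ C of the column spaces of M, and the third slice space dimension equals the dimension of the sum of the row spaces. -/
open Matrix

variable {F : Type*} [Field F]

/-- Column space of a matrix: the span of its columns. -/
def colSpace {n m : ℕ} (M : Matrix (Fin n) (Fin m) F) : Submodule F (Fin n → F) :=
  Submodule.span F (Set.range Mᵀ)

lemma colSpace_le_iff {n m : ℕ} (M : Matrix (Fin n) (Fin m) F) (U : Submodule F (Fin n → F)) :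
    colSpace M ≤ U ↔ ∀ j, Mᵀ j ∈ U := by
  rw [colSpace, Submodule.span_le]
  exact ⟨fun h j => h ⟨j, rfl⟩, by rintro h _ ⟨j, rfl⟩; exact h j⟩

/-- `C(U)`: the codewords of `C` whose column space is contained in `U`. -/
def codeCU {n m : ℕ} (C : Submodule F (Matrix (Fin n) (Fin m) F))
    (U : Submodule F (Fin n → F)) : Submodule F (Matrix (Fin n) (Fin m) F) where
  carrier := {M | M ∈ C ∧ colSpace M ≤ U}
  add_mem' := by
    rintro a b ⟨haC, ha⟩ ⟨hbC, hb⟩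
    refine ⟨C.add_mem haC hbC, (colSpace_le_iff _ _).2 fun j => ?_⟩
    have h := U.add_mem ((colSpace_le_iff a U).1 ha j) ((colSpace_le_iff b U).1 hb j)
    rw [Matrix.transpose_add]; exact h
  zero_mem' := by
    exact ⟨C.zero_mem, (colSpace_le_iff _ _).2 fun j => U.zero_mem⟩
  smul_mem' := by
    rintro c a ⟨haC, ha⟩
    refine ⟨C.smul_mem c haC, (colSpace_le_iff _ _).2 fun j => ?_⟩
    have h := U.smul_mem c ((colSpace_le_iff a U).1 ha j)
    rw [Matrix.transpose_smul]; exact h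

/-- Orthogonal complement with respect to the standard (dot-product) bilinear form. -/
def perp {n : ℕ} (U : Submodule F (Fin n → F)) : Submodule F (Fin n → F) where
  carrier := {v | ∀ u ∈ U, v ⬝ᵥ u = 0}
  add_mem' := by
    intro a b ha hb u hu
    rw [add_dotProduct, ha u hu, hb u hu, add_zero]
  zero_mem' := by
    intro u hu
    rw [zero_dotProduct]
  smul_mem' := by
    intro c a ha u hu
    rw [smul_dotProduct, ha u hu, smul_zero]

/-- The minimum rank distance of a matrix code. -/
noncomputable def minRankDist {n m : ℕ} (C : Submodule F (Matrix (Fin n) (Fin m) F)) : ℕ :=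
  sInf {r : ℕ | ∃ M ∈ C, M ≠ 0 ∧ M.rank = r}

/-- The rank function of the q-polymatroid associated to a matrix rank-metric code. -/
noncomputable def rhoCode {n m : ℕ} (C : Submodule F (Matrix (Fin n) (Fin m) F))
    (U : Submodule F (Fin n → F)) : ℚ :=
  ((Module.finrank F C : ℚ) - (Module.finrank F (codeCU C (perp U)) : ℚ)) / (m : ℚ)

/-- First slice space of a 3-tensor `T ∈ F^(k×n×m)`: span of the slices obtained by fixing
the first index. -/
def sliceSpace1 {k n m : ℕ} (T : Fin k → Fin n → Fin m → F) :
    Submodule F (Matrix (Fin n) (Fin m) F) :=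
  Submodule.span F (Set.range fun l : Fin k => Matrix.of (T l))

/-- Second slice space: span of the slices obtained by fixing the second index. -/
def sliceSpace2 {k n m : ℕ} (T : Fin k → Fin n → Fin m → F) :
    Submodule F (Matrix (Fin k) (Fin m) F) :=
  Submodule.span F (Set.range fun i : Fin n => Matrix.of (fun l j => T l i j))

/-- Third slice space: span of the slices obtained by fixing the third index. -/
def sliceSpace3 {k n m : ℕ} (T : Fin k → Fin n → Fin m → F) :
    Submodule F (Matrix (Fin k) (Fin n) F) :=
  Submodule.span F (Set.range fun j : Fin m => Matrix.of (fun l i => T l i j))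

/-- Row space of a matrix: the span of its rows. -/
def rowSpace {n m : ℕ} (M : Matrix (Fin n) (Fin m) F) : Submodule F (Fin m → F) :=
  Submodule.span F (Set.range M)

/- The second slice space is the row space of the mode-2 flattening `A` of `T`, an `n × km` matrix
whose columns are the columns of all the slices `T l`; the column space of `A` is the sum of their
column spaces, which by linearity is the sum of the column spaces of all codewords. Row rank equals
column rank. The third slice space is the second one of the tensor with its last two indices swapped,
whose slices are the transposed codewords. -/

lemma iSup_mem_span_span_range_apply {ι E V : Type*} [AddCommGroup E] [Module F E]
    [AddCommGroup V] [Module F V] (g : ι → E →ₗ[F] V) (s : Set E) :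
    ⨆ x ∈ Submodule.span F s, Submodule.span F (Set.range fun j => g j x) =
      ⨆ x ∈ s, Submodule.span F (Set.range fun j => g j x) := by
  set W := ⨆ x ∈ s, Submodule.span F (Set.range fun j => g j x)
  have hspan : Submodule.span F s ≤ ⨅ j, W.comap (g j) :=
    Submodule.span_le.2 fun x hx =>
      (Submodule.mem_iInf _).2 fun j =>
        le_biSup (fun y => Submodule.span F (Set.range fun i => g i y)) hx
          (Submodule.subset_span ⟨j, rfl⟩)
  refine le_antisymm (iSup₂_le fun x hx => Submodule.span_le.2 ?_)
    (biSup_mono fun _ hx => Submodule.subset_span hx)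
  rintro _ ⟨j, rfl⟩
  exact (Submodule.mem_iInf _).1 (hspan hx) j

section

variable {n m : ℕ}

lemma colSpace_eq_span_range_apply (M : Matrix (Fin n) (Fin m) F) :
    colSpace M = Submodule.span F (Set.range fun j =>
      (LinearMap.proj j ∘ₗ (transposeLinearEquiv (Fin n) (Fin m) F F).toLinearMap) M) :=
  rfl

lemma iSup_mem_span_colSpace (s : Set (Matrix (Fin n) (Fin m) F)) :
    ⨆ M ∈ Submodule.span F s, colSpace M = ⨆ M ∈ s, colSpace M := by
  simp only [colSpace_eq_span_range_apply]
  exact iSup_mem_span_span_range_apply _ s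

lemma iSup_mem_span_rowSpace (s : Set (Matrix (Fin n) (Fin m) F)) :
    ⨆ M ∈ Submodule.span F s, rowSpace M = ⨆ M ∈ s, rowSpace M :=
  iSup_mem_span_span_range_apply
    (fun i => (LinearMap.proj i : Matrix (Fin n) (Fin m) F →ₗ[F] Fin m → F)) s

end

section

variable {k n m : ℕ} (T : Fin k → Fin n → Fin m → F)

def mode2Flattening : Matrix (Fin n) (Fin k × Fin m) F :=
  of fun i lj => T lj.1 i lj.2

lemma map_curry_span_rows_mode2Flattening :
    (Submodule.span F (Set.range (mode2Flattening T).row)).map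
      (LinearEquiv.curry F F (Fin k) (Fin m) :
        (Fin k × Fin m → F) ≃ₗ[F] Matrix (Fin k) (Fin m) F).toLinearMap = sliceSpace2 T := by
  rw [Submodule.map_span, ← Set.range_comp]
  rfl

lemma span_cols_mode2Flattening :
    Submodule.span F (Set.range (mode2Flattening T).col) = ⨆ l, colSpace (of (T l)) := by
  have hcols : Set.range (mode2Flattening T).col = ⋃ l, Set.range (of (T l))ᵀ := by
    ext v
    simp only [Set.mem_range, Set.mem_iUnion, Prod.exists]
    rfl
  rw [hcols, Submodule.span_iUnion]
  rfl

lemma finrank_sliceSpace2 :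
    Module.finrank F (sliceSpace2 T) = Module.finrank F ↥(⨆ l, colSpace (of (T l))) := by
  calc Module.finrank F (sliceSpace2 T)
      = Module.finrank F (Submodule.span F (Set.range (mode2Flattening T).row)) := by
        rw [← map_curry_span_rows_mode2Flattening]
        exact LinearEquiv.finrank_map_eq (LinearEquiv.curry F F (Fin k) (Fin m)) _
    _ = Module.finrank F (Submodule.span F (Set.range (mode2Flattening T).col)) :=
        (rank_eq_finrank_span_row _).symm.trans (rank_eq_finrank_span_cols _)
    _ = Module.finrank F ↥(⨆ l, colSpace (of (T l))) := by
        rw [span_cols_mode2Flattening]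

lemma sliceSpace3_eq_sliceSpace2_swap :
    sliceSpace3 T = sliceSpace2 fun l j i => T l i j :=
  rfl

end

theorem slice_space_dims_general {k n m : ℕ}
    (C : Submodule F (Matrix (Fin n) (Fin m) F))
    (T : Fin k → Fin n → Fin m → F) (hT : sliceSpace1 T = C) :
    Module.finrank F (sliceSpace2 T) = Module.finrank F ↥(⨆ M ∈ C, colSpace M) ∧
    Module.finrank F (sliceSpace3 T) = Module.finrank F ↥(⨆ M ∈ C, rowSpace M) := by
  subst hT
  refine ⟨?_, ?_⟩
  · rw [finrank_sliceSpace2, sliceSpace1, iSup_mem_span_colSpace, iSup_range]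
  · rw [sliceSpace3_eq_sliceSpace2_swap, finrank_sliceSpace2, sliceSpace1,
      iSup_mem_span_rowSpace, iSup_range]
    rfl

/-- for a generator tensor `T` of `C`, the second slice space dimension equals
the dimension of the sum of column spaces of codewords, and the third slice space dimension
equals the dimension of the sum of row spaces. -/
theorem slice_space_dims [Fintype F] {k n m : ℕ}
    (C : Submodule F (Matrix (Fin n) (Fin m) F))
    (hdim : Module.finrank F C = k)
    (T : Fin k → Fin n → Fin m → F) (hT : sliceSpace1 T = C) :
    Module.finrank F (sliceSpace2 T) = Module.finrank F ↥(⨆ M ∈ C, colSpace M) ∧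
    Module.finrank F (sliceSpace3 T) = Module.finrank F ↥(⨆ M ∈ C, rowSpace M) :=
  slice_space_dims_general C T hT
end

section
/- Let C ⊆ F_q^{n×m} be an F_q-linear rank-metric code of dimension k with generator tensor T, let M be the associated q-polymatroid with rank function ρ_C(U) = (k - dim C(U^⊥))/m, and let u_1, ..., u_N be representatives of the one-dimensional subspaces of F_q^n (N = (q^n - 1)/(q - 1)). For a subset A of projective points with representatives u_{i_1},...,u_{i_s}, the rank of the span ⟨u_{i_1},...,u_{i_s}⟩ under ρ_C equals (1/m)·dim of the F_q-row space of the concatenated block matrix (m_2(u_{i_1},T) | ... | m_2(u_{i_s},T)). In particular, the projectivization of M is the polymatroid induced by the extended additive Hamming-metric code of C. -/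
open Matrix

variable {F : Type*} [Field F]

/-! `m · ρ_C(⟨u⟩) = k - dim C(⟨u⟩^⊥)`, and a codeword `M` has its column space in `⟨u⟩^⊥` exactly
when all the row vectors `u_p M` vanish. So `C(⟨u⟩^⊥)` is the kernel of `M ↦ (u₁ M | ⋯ | uₛ M)`
on `C`, whose image is spanned by the images of the slices of `T`, i.e. by the rows of the block
matrix; rank–nullity finishes the proof. -/

theorem Submodule.finrank_map_add_finrank_inf_ker {K V W : Type*} [DivisionRing K]
    [AddCommGroup V] [Module K V] [AddCommGroup W] [Module K W] [FiniteDimensional K V]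
    (f : V →ₗ[K] W) (p : Submodule K V) :
    Module.finrank K (p.map f) + Module.finrank K ↥(p ⊓ LinearMap.ker f) =
      Module.finrank K p := by
  have h := LinearMap.finrank_range_add_finrank_ker (f.domRestrict p)
  rwa [LinearMap.range_domRestrict, LinearMap.ker_domRestrict, ← Submodule.finrank_map_subtype_eq,
    Submodule.map_comap_subtype] at h

/-- `M ↦ (u₁ M | ⋯ | uₛ M)`. On the slice `of (T l)` this is row `l` of the block matrix
`(m₂(u₁,T) | ⋯ | m₂(uₛ,T))`. -/
def contractConcat {n m s : ℕ} (u : Fin s → Fin n → F) :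
    Matrix (Fin n) (Fin m) F →ₗ[F] (Fin s × Fin m → F) where
  toFun M p := (u p.1 ᵥ* M) p.2
  map_add' M N := by ext p; simp only [vecMul_add, Pi.add_apply]
  map_smul' c M := by ext p; simp only [vecMul_smul, Pi.smul_apply, RingHom.id_apply]

lemma mem_perp_span_iff {n : ℕ} (S : Set (Fin n → F)) (v : Fin n → F) :
    v ∈ perp (Submodule.span F S) ↔ ∀ w ∈ S, v ⬝ᵥ w = 0 := by
  refine ⟨fun h w hw => h w (Submodule.subset_span hw), fun h w hw => ?_⟩
  induction hw using Submodule.span_induction with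
  | mem x hx => exact h x hx
  | zero => exact dotProduct_zero v
  | add x y _ _ hx hy => rw [dotProduct_add, hx, hy, add_zero]
  | smul c x _ hx => rw [dotProduct_smul, hx, smul_zero]

lemma codeCU_perp_span_range {n m s : ℕ} (C : Submodule F (Matrix (Fin n) (Fin m) F))
    (u : Fin s → Fin n → F) :
    codeCU C (perp (Submodule.span F (Set.range u))) = C ⊓ LinearMap.ker (contractConcat u) := by
  ext M
  change M ∈ C ∧ colSpace M ≤ _ ↔ M ∈ C ∧ contractConcat u M = 0
  refine and_congr_right fun _ => ?_
  simp only [colSpace_le_iff, mem_perp_span_iff, Set.forall_mem_range, funext_iff, Prod.forall]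
  rw [forall_comm]
  simp only [dotProduct_comm (Mᵀ _)]
  rfl

lemma span_range_contractConcat_slices {k n m s : ℕ} (T : Fin k → Fin n → Fin m → F)
    (u : Fin s → Fin n → F) :
    Submodule.span F (Set.range fun l => contractConcat u (Matrix.of (T l))) =
      (sliceSpace1 T).map (contractConcat u) := by
  rw [sliceSpace1, Submodule.map_span, ← Set.range_comp]
  rfl

theorem projectivization_rank_general {k n m : ℕ}
    (C : Submodule F (Matrix (Fin n) (Fin m) F))
    (T : Fin k → Fin n → Fin m → F) (hT : sliceSpace1 T = C) :
    ∀ (s : ℕ) (u : Fin s → (Fin n → F)),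
      rhoCode C (Submodule.span F (Set.range u)) =
        (Module.finrank F (Submodule.span F (Set.range
          (fun l : Fin k => fun p : Fin s × Fin m => ∑ i, u p.1 i * T l i p.2))) : ℚ) / m := by
  intro s u
  rw [rhoCode, codeCU_perp_span_range,
    ← Submodule.finrank_map_add_finrank_inf_ker (contractConcat u) C, Nat.cast_add,
    add_sub_cancel_right, ← hT, ← span_range_contractConcat_slices]
  rfl

/-- the rank (under `ρ_C`) of the span of representatives `u_1, ..., u_s` equals
`(1/m)` times the dimension of the row space of the concatenated block matrix
`(m_2(u_1,T) | ... | m_2(u_s,T))`; i.e. the projectivization of `M[C]` is the polymatroid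
induced by the extended additive Hamming-metric code of `C`. -/
theorem projectivization_rank [Fintype F] {k n m : ℕ} (hm : 0 < m)
    (C : Submodule F (Matrix (Fin n) (Fin m) F))
    (hdim : Module.finrank F C = k)
    (T : Fin k → Fin n → Fin m → F) (hT : sliceSpace1 T = C) :
    ∀ (s : ℕ) (u : Fin s → (Fin n → F)),
      rhoCode C (Submodule.span F (Set.range u)) =
        (Module.finrank F (Submodule.span F (Set.range
          (fun l : Fin k => fun p : Fin s × Fin m => ∑ i, u p.1 i * T l i p.2))) : ℚ) / m :=
  projectivization_rank_general C T hT
end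

section
/- Let M = (L(E), ρ) be a q-matroid on E = F_q^n and let B = {v_1,...,v_n} be a basis of E. Define r : 2^B → Z by r(A) = ρ(span of A). Then (B, r) is a matroid, i.e., r satisfies: 0 ≤ r(A) ≤ |A|; A ⊆ B' implies r(A) ≤ r(B'); and r(A ∪ B') + r(A ∩ B') ≤ r(A) + r(B') for all A, B' ⊆ B. -/
open Matrix

variable {F : Type*} [Field F]

section InducedRank

variable {ι R M : Type*} [Semiring R] [AddCommMonoid M] [Module R M]

def inducedRank (ρ : Submodule R M → ℕ) (v : ι → M) (A : Finset ι) : ℕ :=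
  ρ (Submodule.span R (v '' A))

theorem inducedRank_mono {ρ : Submodule R M → ℕ} (hρ : Monotone ρ) (v : ι → M) :
    Monotone (inducedRank ρ v) :=
  fun _ _ hAB => hρ (Submodule.span_mono (Set.image_mono (Finset.coe_subset.2 hAB)))

theorem span_image_finset_union [DecidableEq ι] (v : ι → M) (A B : Finset ι) :
    Submodule.span R (v '' ↑(A ∪ B)) = Submodule.span R (v '' A) ⊔ Submodule.span R (v '' B) := by
  rw [Finset.coe_union, Set.image_union, Submodule.span_union]

theorem span_image_finset_inter_le [DecidableEq ι] (v : ι → M) (A B : Finset ι) :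
    Submodule.span R (v '' ↑(A ∩ B)) ≤ Submodule.span R (v '' A) ⊓ Submodule.span R (v '' B) :=
  le_inf (Submodule.span_mono (Set.image_mono (by simp)))
    (Submodule.span_mono (Set.image_mono (by simp)))

theorem inducedRank_union_add_inter_le [DecidableEq ι] {ρ : Submodule R M → ℕ} (hρ : Monotone ρ)
    (hsub : ∀ U W : Submodule R M, ρ (U ⊓ W) + ρ (U ⊔ W) ≤ ρ U + ρ W) (v : ι → M)
    (A B : Finset ι) :
    inducedRank ρ v (A ∪ B) + inducedRank ρ v (A ∩ B) ≤ inducedRank ρ v A + inducedRank ρ v B :=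
  calc inducedRank ρ v (A ∪ B) + inducedRank ρ v (A ∩ B)
      ≤ ρ (Submodule.span R (v '' A) ⊓ Submodule.span R (v '' B)) +
          ρ (Submodule.span R (v '' A) ⊔ Submodule.span R (v '' B)) := by
        -- `⟨v '' (A ∩ B)⟩ = ⟨v '' A⟩ ⊓ ⟨v '' B⟩` needs `v` independent; monotonicity of `ρ` suffices.
        rw [inducedRank, span_image_finset_union, add_comm]
        exact Nat.add_le_add_right (hρ (span_image_finset_inter_le v A B)) _
    _ ≤ inducedRank ρ v A + inducedRank ρ v B := hsub _ _

end InducedRank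

theorem inducedRank_le_card {ι K V : Type*} [DivisionRing K] [AddCommGroup V] [Module K V]
    {ρ : Submodule K V → ℕ} (hρ : ∀ U : Submodule K V, ρ U ≤ Module.finrank K U)
    (v : ι → V) (A : Finset ι) : inducedRank ρ v A ≤ A.card := by
  classical
  calc inducedRank ρ v A ≤ Module.finrank K (Submodule.span K (v '' A)) := hρ _
    _ = Set.finrank K ((A.image v : Finset V) : Set V) := by rw [Finset.coe_image]; rfl
    _ ≤ (A.image v).card := finrank_span_finset_le_card _
    _ ≤ A.card := Finset.card_image_le

theorem induced_matroid_general {n : ℕ}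
    (ρ : Submodule F (Fin n → F) → ℕ)
    (h1 : ∀ A : Submodule F (Fin n → F), ρ A ≤ Module.finrank F A)
    (h2 : ∀ A B : Submodule F (Fin n → F), A ≤ B → ρ A ≤ ρ B)
    (h3 : ∀ A B : Submodule F (Fin n → F), ρ (A ⊓ B) + ρ (A ⊔ B) ≤ ρ A + ρ B)
    (b : Module.Basis (Fin n) F (Fin n → F)) :
    let r : Finset (Fin n) → ℕ :=
      fun A => ρ (Submodule.span F (⇑b '' (A : Set (Fin n))))
    (∀ A : Finset (Fin n), r A ≤ A.card) ∧
    (∀ A B : Finset (Fin n), A ⊆ B → r A ≤ r B) ∧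
    (∀ A B : Finset (Fin n), r (A ∪ B) + r (A ∩ B) ≤ r A + r B) := by
  have hmono : Monotone ρ := fun U W => h2 U W
  exact ⟨inducedRank_le_card h1 b, fun _ _ hAB => inducedRank_mono hmono b hAB,
    inducedRank_union_add_inter_le hmono h3 b⟩

/-- the matroid induced by a q-matroid with respect to a basis of `E`. -/
theorem induced_matroid [Fintype F] {n : ℕ}
    (ρ : Submodule F (Fin n → F) → ℕ)
    (h1 : ∀ A : Submodule F (Fin n → F), ρ A ≤ Module.finrank F A)
    (h2 : ∀ A B : Submodule F (Fin n → F), A ≤ B → ρ A ≤ ρ B)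
    (h3 : ∀ A B : Submodule F (Fin n → F), ρ (A ⊓ B) + ρ (A ⊔ B) ≤ ρ A + ρ B)
    (b : Module.Basis (Fin n) F (Fin n → F)) :
    let r : Finset (Fin n) → ℕ :=
      fun A => ρ (Submodule.span F (⇑b '' (A : Set (Fin n))))
    (∀ A : Finset (Fin n), r A ≤ A.card) ∧
    (∀ A B : Finset (Fin n), A ⊆ B → r A ≤ r B) ∧
    (∀ A B : Finset (Fin n), r (A ∪ B) + r (A ∩ B) ≤ r A + r B) :=
  induced_matroid_general ρ h1 h2 h3 b
end
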